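/- arXiv:2011.14074 — 3 statements merged into one kernel-verified Lean document; each statement's English description precedes it below -/
import Mathlib

section
/- Let F, G be locally finite pointed graphs with G connected, and let H be a graph. Suppose that for every connected finite pointed subgraph Ĝ of G, every red-blue edge coloring of F yields either a red copy of Ĝ as a pointed subgraph of F or a blue copy of H in F. Then every red-blue edge coloring of F yields either a red copy of G as a pointed subgraph of F or a blue copy of H in F. -/
open SimpleGraph

/-- `G` embeds into `H`: an injective graph homomorphism (not necessarily induced). -/
def EmbedsIn {α β : Type*} (G : SimpleGraph α) (H : SimpleGraph β) : Prop :=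
  ∃ f : G →g H, Function.Injective f

/-- `G` is self-embeddable: it admits an injective adjacency-preserving self-map whose
image, as a subgraph, is a proper subgraph (strictly smaller edge set). -/
def SelfEmbeddable {α : Type*} (G : SimpleGraph α) : Prop :=
  ∃ f : G →g G, Function.Injective f ∧ Sym2.map f '' G.edgeSet ⊂ G.edgeSet

/-- `G` is strongly self-embeddable: `G` embeds into `G - v` for every vertex `v`. -/
def StronglySelfEmbeddable {α : Type*} (G : SimpleGraph α) : Prop :=
  ∀ v : α, EmbedsIn G (G.induce ({v}ᶜ : Set α))

/-- The subgraph of `F` consisting of the edges with color `b` under coloring `c`. -/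
def colorSubgraph {α : Type*} (F : SimpleGraph α) (c : Sym2 α → Bool) (b : Bool) :
    SimpleGraph α where
  Adj x y := F.Adj x y ∧ c s(x, y) = b
  symm := by
    constructor
    intro x y h
    exact ⟨h.1.symm, by rw [Sym2.eq_swap]; exact h.2⟩
  loopless := by constructor; intro x h; exact F.loopless.irrefl x h.1

/-- `F → (G, H)` : every red-blue coloring of the edges of `F` yields a red copy of `G`
or a blue copy of `H` (here `true` = red, `false` = blue). -/
def Arrows {α β γ : Type*} (F : SimpleGraph α) (G : SimpleGraph β) (H : SimpleGraph γ) : Prop :=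
  ∀ c : Sym2 α → Bool,
    EmbedsIn G (colorSubgraph F c true) ∨ EmbedsIn H (colorSubgraph F c false)

/-- `F` is `(G,H)`-minimal: it arrows `(G,H)` but no proper subgraph of it does. -/
def RamseyMinimal {α β γ : Type*} (F : SimpleGraph α) (G : SimpleGraph β)
    (H : SimpleGraph γ) : Prop :=
  Arrows F G H ∧ ∀ F' : SimpleGraph α, F' < F → ¬ Arrows F' G H

/-- `G` has no isolated vertices. -/
def NoIsolated {α : Type*} (G : SimpleGraph α) : Prop := ∀ v, ∃ w, G.Adj v w

/-- The single-edge graph `K₂`. -/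
def K2 : SimpleGraph (Fin 2) := ⊤

/-- The matching `nK₂` with `n` pairwise disjoint edges. -/
def Matching (n : ℕ) : SimpleGraph (Fin n × Fin 2) where
  Adj a b := a.1 = b.1 ∧ a.2 ≠ b.2
  symm := by constructor; intro a b h; exact ⟨h.1.symm, h.2.symm⟩
  loopless := by constructor; intro a h; exact h.2 rfl

/-- The disjoint union `nG` of `n` copies of `G`. -/
def nCopies {V : Type*} (n : ℕ) (G : SimpleGraph V) : SimpleGraph (Fin n × V) where
  Adj a b := a.1 = b.1 ∧ G.Adj a.2 b.2
  symm := by constructor; intro a b h; exact ⟨h.1.symm, h.2.symm⟩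
  loopless := by constructor; intro a h; exact G.loopless.irrefl a.2 h.2

/-- The infinite star `S_∞ = K_{1,∞}`, with center `none`. -/
def InfStar : SimpleGraph (Option ℕ) := SimpleGraph.fromRel (fun a _ => a = none)

/-- The finite star `K_{1,n}`, with center `none`. -/
def StarN (n : ℕ) : SimpleGraph (Option (Fin n)) := SimpleGraph.fromRel (fun a _ => a = none)

/-- The ray `P_∞` (one-way infinite path) on `ℕ`. -/
def Ray : SimpleGraph ℕ := SimpleGraph.fromRel (fun a b => b = a + 1)

/-- The `k`-ray `P_{k∞}`: `k` rays glued at a common endpoint `none`. -/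
def kRay (k : ℕ) : SimpleGraph (Option (Fin k × ℕ)) :=
  SimpleGraph.fromRel (fun a b =>
    (a = none ∧ ∃ i, b = some (i, 0)) ∨ (∃ i n, a = some (i, n) ∧ b = some (i, n + 1)))

/-!
Kőnig-type compactness. A pointed injective homomorphism of a finite connected graph with `n`
vertices into a locally finite graph `R` lands in the ball of radius `n` around the basepoint of
`R`, so each connected finite pointed subgraph `S` of `G` has only finitely many pointed embeddings
into `R`, and by hypothesis at least one. Restriction makes these sets an inverse system over the
directed set of such subgraphs; an element of its inverse limit is a compatible family of pointed
embeddings, which glue to a pointed embedding of all of `G` because every vertex and every edge of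
the connected graph `G` lies in some connected finite pointed subgraph.
-/

open CategoryTheory

universe u v

namespace SimpleGraph

variable {V : Type u} {W : Type v}

lemma finite_setOf_exists_walk_length_le {R : SimpleGraph W}
    (hR : ∀ w, (R.neighborSet w).Finite) (n : ℕ) (u : W) :
    {w | ∃ p : R.Walk u w, p.length ≤ n}.Finite := by
  induction n generalizing u with
  | zero =>
    refine (Set.finite_singleton u).subset ?_
    rintro w ⟨p, hp⟩
    cases p with
    | nil => rfl
    | cons => simp at hp
  | succ n ih =>
    refine ((Set.finite_singleton u).union ((hR u).biUnion fun v _ => ih v)).subset ?_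
    rintro w ⟨p, hp⟩
    cases p with
    | nil => exact Or.inl rfl
    | cons hadj q => exact Or.inr (Set.mem_biUnion hadj ⟨q, by simpa using hp⟩)

lemma Reachable.exists_walk_length_lt_card [Fintype V] {G : SimpleGraph V} {u v : V}
    (h : G.Reachable u v) : ∃ p : G.Walk u v, p.length < Fintype.card V := by
  classical
  exact ⟨h.some.toPath, h.some.toPath.2.length_lt⟩

lemma Preconnected.finite_hom_apply_eq [Finite V] {G : SimpleGraph V} {R : SimpleGraph W}
    (hG : G.Preconnected) (hR : ∀ w, (R.neighborSet w).Finite) (v : V) (w : W) :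
    Finite {f : G →g R // f v = w} := by
  have := Fintype.ofFinite V
  set ball := {x | ∃ p : R.Walk w x, p.length ≤ Fintype.card V}
  have mem_ball (f : {f : G →g R // f v = w}) (u : V) : f.1 u ∈ ball := by
    obtain ⟨p, hp⟩ := Reachable.exists_walk_length_lt_card (hG v u)
    exact ⟨(p.map f.1).copy f.2 rfl, by simpa using hp.le⟩
  have := (finite_setOf_exists_walk_length_le hR (Fintype.card V) w).to_subtype
  refine Finite.of_injective (fun f u => (⟨f.1 u, mem_ball f u⟩ : ball)) fun f g hfg => ?_
  exact Subtype.ext (RelHom.ext fun u => congrArg Subtype.val (congrFun hfg u))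

abbrev FinConnSubgraph (G : SimpleGraph V) (p : V) : Type u :=
  {S : G.Subgraph // S.verts.Finite ∧ S.Connected ∧ p ∈ S.verts}

variable {G : SimpleGraph V} {p : V}

instance : Nonempty (G.FinConnSubgraph p) :=
  ⟨⟨G.singletonSubgraph p, Set.finite_singleton p, Subgraph.singletonSubgraph_connected, rfl⟩⟩

instance : IsDirectedOrder (G.FinConnSubgraph p) :=
  ⟨fun S T => ⟨⟨S.1 ⊔ T.1, S.2.1.union T.2.1,
    Subgraph.connected_sup S.2.2.1.preconnected T.2.2.1.preconnected ⟨p, S.2.2.2, T.2.2.2⟩,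
    Or.inl S.2.2.2⟩, le_sup_left (a := S.1), le_sup_right (a := S.1)⟩⟩

def Walk.toFinConnSubgraph {v : V} (q : G.Walk p v) : G.FinConnSubgraph p :=
  ⟨q.toSubgraph, by simp, q.toSubgraph_connected, q.start_mem_verts_toSubgraph⟩

lemma Preconnected.exists_finConnSubgraph_adj (hG : G.Preconnected) {a b : V} (hab : G.Adj a b) :
    ∃ (S : G.FinConnSubgraph p) (ha : a ∈ S.1.verts) (hb : b ∈ S.1.verts),
      S.1.coe.Adj ⟨a, ha⟩ ⟨b, hb⟩ := by
  let q := (hG p a).some.concat hab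
  have hadj : q.toSubgraph.Adj a b := by
    rw [← Subgraph.mem_edgeSet, Walk.mem_edges_toSubgraph, Walk.edges_concat]
    simp
  exact ⟨q.toFinConnSubgraph, hadj.fst_mem, hadj.snd_mem, hadj⟩

variable (R : SimpleGraph W) (q : W)

def PointedEmbeddings (S : G.FinConnSubgraph p) : Type (max u v) :=
  {f : S.1.coe →g R // Function.Injective f ∧ f ⟨p, S.2.2.2⟩ = q}

variable (G p) in
def pointedEmbeddingsFunctor : (G.FinConnSubgraph p)ᵒᵖ ⥤ Type (max u v) where
  obj S := PointedEmbeddings R q S.unop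
  map h := TypeCat.ofHom fun f =>
    ⟨f.1.comp (Subgraph.inclusion (leOfHom h.unop)),
      f.2.1.comp (Subgraph.inclusion.injective _), f.2.2⟩

variable {R q}

lemma finite_pointedEmbeddings (hR : ∀ w, (R.neighborSet w).Finite)
    (S : G.FinConnSubgraph p) : Finite (PointedEmbeddings R q S) :=
  have := S.2.1.to_subtype
  have := S.2.2.1.preconnected.coe.finite_hom_apply_eq hR ⟨p, S.2.2.2⟩ q
  Finite.of_injective
    (fun f : PointedEmbeddings R q S => (⟨f.1, f.2.2⟩ : {f : S.1.coe →g R // f ⟨p, S.2.2.2⟩ = q}))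
    fun _ _ h => Subtype.ext (Subtype.mk.inj h)

lemma pointedEmbeddingsFunctor_section_apply_eq {u : ∀ S, (pointedEmbeddingsFunctor G p R q).obj S}
    (hu : u ∈ (pointedEmbeddingsFunctor G p R q).sections)
    {S T : G.FinConnSubgraph p} {v : V} (hS : v ∈ S.1.verts) (hT : v ∈ T.1.verts) :
    (u (.op S)).1 ⟨v, hS⟩ = (u (.op T)).1 ⟨v, hT⟩ := by
  have restrict {S T : G.FinConnSubgraph p} (hST : S ≤ T) (hS : v ∈ S.1.verts) :
      (u (.op S)).1 ⟨v, hS⟩ = (u (.op T)).1 ⟨v, hST.1 hS⟩ := by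
    rw [← hu (homOfLE hST).op]; rfl
  obtain ⟨U, hSU, hTU⟩ := exists_ge_ge S T
  rw [restrict hSU, restrict hTU]

theorem Preconnected.exists_injective_hom_of_finConnSubgraph (hG : G.Preconnected)
    (hR : ∀ w, (R.neighborSet w).Finite)
    (h : ∀ S : G.FinConnSubgraph p,
      ∃ f : S.1.coe →g R, Function.Injective f ∧ f ⟨p, S.2.2.2⟩ = q) :
    ∃ f : G →g R, Function.Injective f ∧ f p = q := by
  have (S : (G.FinConnSubgraph p)ᵒᵖ) : Finite ((pointedEmbeddingsFunctor G p R q).obj S) :=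
    finite_pointedEmbeddings hR S.unop
  have (S : (G.FinConnSubgraph p)ᵒᵖ) : Nonempty ((pointedEmbeddingsFunctor G p R q).obj S) :=
    let ⟨f, hf⟩ := h S.unop; ⟨⟨f, hf⟩⟩
  obtain ⟨u, hu⟩ := nonempty_sections_of_finite_inverse_system (pointedEmbeddingsFunctor G p R q)
  let S (v : V) : G.FinConnSubgraph p := (hG p v).some.toFinConnSubgraph
  have hS (v : V) : v ∈ (S v).1.verts := (hG p v).some.end_mem_verts_toSubgraph
  refine ⟨⟨fun v => (u (.op (S v))).1 ⟨v, hS v⟩, fun {a b} hab => ?_⟩, fun a b hab => ?_,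
    (u (.op (S p))).2.2⟩
  · obtain ⟨T, ha, hb, hadj⟩ := hG.exists_finConnSubgraph_adj (p := p) hab
    simpa only [pointedEmbeddingsFunctor_section_apply_eq hu _ ha, pointedEmbeddingsFunctor_section_apply_eq hu _ hb]
      using (u (.op T)).1.map_rel hadj
  · change (u (.op (S a))).1 ⟨a, hS a⟩ = (u (.op (S b))).1 ⟨b, hS b⟩ at hab
    obtain ⟨T, haT, hbT⟩ := exists_ge_ge (S a) (S b)
    rw [pointedEmbeddingsFunctor_section_apply_eq hu (hS a) (haT.1 (hS a)),
      pointedEmbeddingsFunctor_section_apply_eq hu (hS b) (hbT.1 (hS b))] at hab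
    exact congrArg Subtype.val ((u (.op T)).2.1 hab)

end SimpleGraph

theorem stmt5_general {V W U : Type} (G : SimpleGraph V) (F : SimpleGraph W) (H : SimpleGraph U)
    (pG : V) (pF : W)
    (hlfF : ∀ w, (F.neighborSet w).Finite)
    (hconn : G.Connected)
    (h : ∀ S : G.Subgraph, S.verts.Finite → S.coe.Connected → ∀ hp : pG ∈ S.verts,
      ∀ c : Sym2 W → Bool,
        (∃ f : S.coe →g colorSubgraph F c true, Function.Injective f ∧ f ⟨pG, hp⟩ = pF) ∨
          EmbedsIn H (colorSubgraph F c false)) :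
    ∀ c : Sym2 W → Bool,
      (∃ f : G →g colorSubgraph F c true, Function.Injective f ∧ f pG = pF) ∨
        EmbedsIn H (colorSubgraph F c false) := by
  intro c
  refine or_iff_not_imp_right.2 fun hblue => ?_
  have hR (w : W) : ((colorSubgraph F c true).neighborSet w).Finite :=
    (hlfF w).subset fun _ hx => hx.1
  exact hconn.preconnected.exists_injective_hom_of_finConnSubgraph hR fun S =>
    (h S.1 S.2.1 S.2.2.1.coe S.2.2.2 c).resolve_right hblue

/-- Pointed compactness of arrowing: if `F ⟶poi (Ĝ, H)` for every connected finite
pointed subgraph `Ĝ ⊆ G`, then `F ⟶poi (G, H)`. -/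
theorem stmt5 {V W U : Type} (G : SimpleGraph V) (F : SimpleGraph W) (H : SimpleGraph U)
    (pG : V) (pF : W)
    (hlfG : ∀ v, (G.neighborSet v).Finite) (hlfF : ∀ w, (F.neighborSet w).Finite)
    (hconn : G.Connected)
    (h : ∀ S : G.Subgraph, S.verts.Finite → S.coe.Connected → ∀ hp : pG ∈ S.verts,
      ∀ c : Sym2 W → Bool,
        (∃ f : S.coe →g colorSubgraph F c true, Function.Injective f ∧ f ⟨pG, hp⟩ = pF) ∨
          EmbedsIn H (colorSubgraph F c false)) :
    ∀ c : Sym2 W → Bool,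
      (∃ f : G →g colorSubgraph F c true, Function.Injective f ∧ f pG = pF) ∨
        EmbedsIn H (colorSubgraph F c false) :=
  stmt5_general G F H pG pF hlfF hconn h
end

section
/- If G is a connected graph that is not self-embeddable, then for every n ≥ 2 the disjoint union nG of n copies of G is (G, nK₂)-minimal. In particular, (G, nK₂)-minimal graphs exist. -/
open SimpleGraph

/-!
Every colouring of `nG` either makes some copy of `G` entirely red or puts a blue edge in every
copy, so `nG → (G, nK₂)`. For minimality, let `F < nG` miss the edge `(i₀, v)(i₀, w)` and colour
blue exactly the edges at the vertices `(i, v)` with `i ≠ i₀`. These `n - 1` vertices cover all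
blue edges, so there is no blue `nK₂`. A red copy of the connected graph `G` lies inside a single
copy of `G`, so it is a self-embedding of `G`; it avoids the edge `vw` of that copy (missing from
`F` in copy `i₀`, blue in the others), so that self-embedding is proper.
-/

open Finset

variable {V W α : Type*}

lemma colorSubgraph_le (F : SimpleGraph α) (c : Sym2 α → Bool) (b : Bool) :
    colorSubgraph F c b ≤ F :=
  fun _ _ h => h.1

lemma nCopies_fst_eq_of_reachable {n : ℕ} {G : SimpleGraph V} {H : SimpleGraph W}
    (f : G →g nCopies n H) {u w : V} (h : G.Reachable u w) : (f u).1 = (f w).1 := by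
  obtain ⟨p⟩ := h
  induction p with
  | nil => rfl
  | cons hadj _ ih => exact (f.map_adj hadj).1.trans ih

lemma selfEmbeddable_of_embedsIn_le_nCopies {n : ℕ} {G : SimpleGraph V}
    {H : SimpleGraph (Fin n × V)} (hH : H ≤ nCopies n G) (hG : G.Connected)
    (hGH : EmbedsIn G H) {a b : V} (hab : G.Adj a b) (hmiss : ∀ i, ¬ H.Adj (i, a) (i, b)) :
    SelfEmbeddable G := by
  obtain ⟨f, hf⟩ := hGH
  have hfst : ∀ u, (f u).1 = (f a).1 := fun u =>
    nCopies_fst_eq_of_reachable ((Hom.ofLE hH).comp f) (hG.preconnected u a)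
  have hf_eq : ∀ u, f u = ((f a).1, (f u).2) := fun u => Prod.ext (hfst u) rfl
  let g : G →g G := ⟨fun u => (f u).2, fun h => (hH (f.map_adj h)).2⟩
  have hg_image : Sym2.map g '' G.edgeSet ⊆ G.edgeSet := by
    rintro _ ⟨e, he, rfl⟩
    induction e using Sym2.ind with
    | _ u w => exact g.map_adj he
  refine ⟨g, fun u w h => hf (Prod.ext ((hfst u).trans (hfst w).symm) h),
    (Set.ssubset_iff_of_subset hg_image).2 ⟨s(a, b), hab, ?_⟩⟩
  rintro ⟨e, he, hmap⟩
  induction e using Sym2.ind with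
  | _ u w =>
    have hH_uw : H.Adj ((f a).1, g u) ((f a).1, g w) := by
      change H.Adj ((f a).1, (f u).2) ((f a).1, (f w).2)
      rw [← hf_eq, ← hf_eq]
      exact f.map_adj he
    rcases Sym2.eq_iff.1 hmap with ⟨hu, hw⟩ | ⟨hu, hw⟩
    · exact hmiss _ (hu ▸ hw ▸ hH_uw)
    · exact hmiss _ (hu ▸ hw ▸ hH_uw.symm)

lemma embedsIn_matching_of_forall_adj {n : ℕ} {H : SimpleGraph (Fin n × V)}
    (h : ∀ i, ∃ a b, H.Adj (i, a) (i, b)) : EmbedsIn (Matching n) H := by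
  choose a b hab using h
  let f : Fin n × Fin 2 → Fin n × V := fun p => (p.1, ![a p.1, b p.1] p.2)
  have hf_adj : ∀ i, H.Adj (f (i, 0)) (f (i, 1)) := hab
  refine ⟨⟨f, ?_⟩, ?_⟩
  · rintro ⟨i, k⟩ ⟨j, l⟩ ⟨rfl, hkl⟩
    fin_cases k <;> fin_cases l
    exacts [absurd rfl hkl, hf_adj i, (hf_adj i).symm, absurd rfl hkl]
  · rintro ⟨i, k⟩ ⟨j, l⟩ h
    obtain ⟨rfl, h⟩ := Prod.mk.inj h
    have hne : a i ≠ b i := fun h => (hab i).ne (by rw [h])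
    fin_cases k <;> fin_cases l
    exacts [rfl, absurd h hne, absurd h.symm hne, rfl]

lemma not_embedsIn_matching_of_cover {n : ℕ} {H : SimpleGraph α} (S : Finset α)
    (hS : ∀ a b, H.Adj a b → a ∈ S ∨ b ∈ S) (hcard : #S < n) : ¬ EmbedsIn (Matching n) H := by
  rintro ⟨f, hf⟩
  have hcover : ∀ i : Fin n, ∃ k : Fin 2, f (i, k) ∈ S := fun i =>
    (hS _ _ (f.map_adj (⟨rfl, Fin.zero_ne_one⟩ : (Matching n).Adj (i, 0) (i, 1)))).elim
      (fun h => ⟨0, h⟩) (fun h => ⟨1, h⟩)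
  choose k hk using hcover
  have := card_le_card_of_injOn (s := univ) (fun i => f (i, k i)) (fun i _ => hk i)
    fun i _ j _ h => congrArg Prod.fst (hf h)
  simp only [card_univ, Fintype.card_fin] at this
  omega

lemma arrows_nCopies_matching (n : ℕ) (G : SimpleGraph V) :
    Arrows (nCopies n G) G (Matching n) := by
  intro c
  by_cases hred : ∃ i, ∀ a b, G.Adj a b → c s((i, a), (i, b)) = true
  · obtain ⟨i, hi⟩ := hred
    exact .inl ⟨⟨fun u => (i, u), fun h => ⟨⟨rfl, h⟩, hi _ _ h⟩⟩,
      fun _ _ h => congrArg Prod.snd h⟩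
  · push Not at hred
    refine .inr (embedsIn_matching_of_forall_adj fun i => ?_)
    obtain ⟨a, b, hab, hc⟩ := hred i
    exact ⟨a, b, ⟨rfl, hab⟩, Bool.not_eq_true _ ▸ hc⟩

open Classical in
noncomputable def coverColoring (T : Set α) (e : Sym2 α) : Bool :=
  decide (∀ a ∈ e, a ∉ T)

lemma coverColoring_pair_eq_true {T : Set α} {a b : α} :
    coverColoring T s(a, b) = true ↔ a ∉ T ∧ b ∉ T := by
  simp [coverColoring]

lemma coverColoring_pair_eq_false {T : Set α} {a b : α} :
    coverColoring T s(a, b) = false ↔ a ∈ T ∨ b ∈ T := by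
  rw [← Bool.not_eq_true, coverColoring_pair_eq_true]
  tauto

lemma not_arrows_of_lt_nCopies {n : ℕ} {G : SimpleGraph V} (hG : G.Connected)
    (hse : ¬ SelfEmbeddable G) {F : SimpleGraph (Fin n × V)} (hF : F < nCopies n G) :
    ¬ Arrows F G (Matching n) := by
  classical
  obtain ⟨i₀, a, b, hab, hmissing⟩ : ∃ i a b, G.Adj a b ∧ ¬ F.Adj (i, a) (i, b) := by
    by_contra! h
    refine hF.ne (le_antisymm hF.le ?_)
    rintro ⟨i, a⟩ ⟨_, b⟩ ⟨rfl, hab⟩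
    exact h i a b hab
  let T : Finset (Fin n × V) := (univ.erase i₀).image (·, a)
  have hT : ∀ i ≠ i₀, (i, a) ∈ T := fun i hi => by simp [T, hi]
  intro hA
  rcases hA (coverColoring T) with hred | hblue
  · refine hse (selfEmbeddable_of_embedsIn_le_nCopies ((colorSubgraph_le _ _ _).trans hF.le)
      hG hred hab fun i ⟨hF_adj, hc⟩ => ?_)
    by_cases hi : i = i₀
    · exact hmissing (hi ▸ hF_adj)
    · exact (coverColoring_pair_eq_true.1 hc).1 (hT i hi)
  · refine not_embedsIn_matching_of_cover T (fun _ _ (h : (colorSubgraph F _ false).Adj _ _) =>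
      coverColoring_pair_eq_false.1 h.2) ?_ hblue
    calc #T ≤ #(univ.erase i₀) := card_image_le
      _ < n := by
        rw [card_erase_of_mem (mem_univ _), card_univ, Fintype.card_fin]
        exact Nat.sub_one_lt_of_lt i₀.pos

theorem stmt14_general {V : Type} (G : SimpleGraph V) (hconn : G.Connected)
    (hse : ¬ SelfEmbeddable G) (n : ℕ) :
    RamseyMinimal (nCopies n G) G (Matching n) ∧
    ∃ (W : Type) (F : SimpleGraph W), RamseyMinimal F G (Matching n) := by
  have hmin : RamseyMinimal (nCopies n G) G (Matching n) :=
    ⟨arrows_nCopies_matching n G, fun _ hF => not_arrows_of_lt_nCopies hconn hse hF⟩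
  exact ⟨hmin, _, _, hmin⟩

/-- If `G` is connected and not self-embeddable, then `nG` is `(G, nK₂)`-minimal for
every `n ≥ 2`; in particular `(G, nK₂)`-minimal graphs exist. -/
theorem stmt14 {V : Type} (G : SimpleGraph V) (hconn : G.Connected) (hni : NoIsolated G)
    (hse : ¬ SelfEmbeddable G) (n : ℕ) (hn : 2 ≤ n) :
    RamseyMinimal (nCopies n G) G (Matching n) ∧
    ∃ (W : Type) (F : SimpleGraph W), RamseyMinimal F G (Matching n) :=
  stmt14_general G hconn hse n
end

section
/- Every countable graph F having finitely many vertices of infinite degree (forming a set X) such that every edge of F is incident to a vertex of X, is self-embeddable. -/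
open SimpleGraph

/-!
The vertices of finite degree form an independent set (every edge meets `X`), so each of them
has its whole neighbourhood inside the finite set `X`. There are infinitely many of them, hence by
pigeonhole infinitely many share one neighbourhood. Mapping that infinite class injectively but
not surjectively into itself, and fixing all other vertices, is a graph homomorphism; an edge at a
vertex it misses is not in the image.
-/

open Function

theorem Infinite.exists_injective_not_surjective (α : Type*) [Infinite α] :
    ∃ f : α → α, Injective f ∧ ¬ Surjective f := by
  obtain ⟨e⟩ : Nonempty (Option α ≃ α) := Cardinal.eq.1 <| by
    rw [Cardinal.mk_option, Cardinal.add_one_eq (Cardinal.aleph0_le_mk α)]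
  refine ⟨e ∘ some, e.injective.comp (Option.some_injective α), fun h => ?_⟩
  obtain ⟨a, ha⟩ := h (e none)
  exact Option.some_ne_none a (e.injective ha)

open Classical in
noncomputable def Set.extendId {V : Type*} (s : Set V) (f : s → s) (v : V) : V :=
  if h : v ∈ s then f ⟨v, h⟩ else v

namespace Set.extendId

variable {V : Type*} {s : Set V} {f : s → s}

theorem apply_of_mem {v : V} (hv : v ∈ s) : extendId s f v = f ⟨v, hv⟩ := by
  rw [extendId, dif_pos hv]

theorem apply_of_notMem {v : V} (hv : v ∉ s) : extendId s f v = v := by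
  rw [extendId, dif_neg hv]

theorem mem_iff {v : V} : extendId s f v ∈ s ↔ v ∈ s := by
  by_cases hv : v ∈ s
  · simp only [apply_of_mem hv, Subtype.coe_prop, hv]
  · simp only [apply_of_notMem hv, hv]

theorem injective (hf : Injective f) : Injective (extendId s f) := by
  intro a b hab
  by_cases ha : a ∈ s <;> by_cases hb : b ∈ s
  · rw [apply_of_mem ha, apply_of_mem hb] at hab
    exact congrArg Subtype.val (hf (Subtype.ext hab))
  · have := (mem_iff (f := f)).2 ha
    rw [hab, mem_iff] at this
    exact absurd this hb
  · have := (mem_iff (f := f)).2 hb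
    rw [← hab, mem_iff] at this
    exact absurd this ha
  · rwa [apply_of_notMem ha, apply_of_notMem hb] at hab

theorem notMem_range {y : s} (hy : y ∉ range f) : (y : V) ∉ range (extendId s f) := by
  rintro ⟨v, hv⟩
  have hvs : v ∈ s := mem_iff.1 (hv ▸ y.2)
  rw [apply_of_mem hvs] at hv
  exact hy ⟨_, Subtype.ext hv⟩

end Set.extendId

namespace SimpleGraph

variable {V : Type*} {G : SimpleGraph V}

def IsTwinSet (G : SimpleGraph V) (s : Set V) : Prop :=
  ∀ u ∈ s, ∀ v ∈ s, G.neighborSet u = G.neighborSet v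

namespace IsTwinSet

variable {s : Set V}

theorem adj_of_adj (hs : G.IsTwinSet s) {u v x : V} (hu : u ∈ s) (hv : v ∈ s)
    (h : G.Adj u x) : G.Adj v x := by
  rw [← mem_neighborSet, ← hs u hu v hv]
  exact h

theorem not_adj (hs : G.IsTwinSet s) {u v : V} (hu : u ∈ s) (hv : v ∈ s) : ¬ G.Adj u v :=
  fun h => G.loopless.irrefl v (hs.adj_of_adj hu hv h)

noncomputable def extendIdHom (hs : G.IsTwinSet s) (f : s → s) : G →g G where
  toFun := Set.extendId s f
  map_rel' {a b} h := by
    by_cases ha : a ∈ s <;> by_cases hb : b ∈ s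
    · exact absurd h (hs.not_adj ha hb)
    · rw [Set.extendId.apply_of_mem ha, Set.extendId.apply_of_notMem hb]
      exact hs.adj_of_adj ha (f _).2 h
    · rw [Set.extendId.apply_of_notMem ha, Set.extendId.apply_of_mem hb]
      exact (hs.adj_of_adj hb (f _).2 h.symm).symm
    · rwa [Set.extendId.apply_of_notMem ha, Set.extendId.apply_of_notMem hb]

end IsTwinSet

theorem selfEmbeddable_of_notMem_range (f : G →g G) (hf : Injective f) {v w : V}
    (hvw : G.Adj v w) (hv : v ∉ Set.range f) : SelfEmbeddable G := by
  refine ⟨f, hf, Set.ssubset_iff_subset_ne.2 ⟨f.image_edgeSet_subset, fun h => ?_⟩⟩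
  obtain ⟨e, -, he⟩ : s(v, w) ∈ Sym2.map f '' G.edgeSet := by rw [h]; exact hvw
  obtain ⟨u, -, hu⟩ := Sym2.mem_map.1 (he ▸ Sym2.mem_mk_left v w)
  exact hv ⟨u, hu⟩

theorem IsTwinSet.selfEmbeddable {s : Set V} (hs : G.IsTwinSet s) (hinf : s.Infinite)
    {v w : V} (hv : v ∈ s) (hvw : G.Adj v w) : SelfEmbeddable G := by
  have := hinf.to_subtype
  obtain ⟨f, hf, hnsurj⟩ := Infinite.exists_injective_not_surjective s
  obtain ⟨y, hy⟩ := not_forall.1 hnsurj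
  exact selfEmbeddable_of_notMem_range (hs.extendIdHom f) (Set.extendId.injective hf)
    (hs.adj_of_adj hv y.2 hvw) (Set.extendId.notMem_range hy)

theorem exists_infinite_isTwinSet {X T : Set V} (hX : X.Finite) (hT : T.Infinite)
    (hN : ∀ v ∈ T, G.neighborSet v ⊆ X) : ∃ s ⊆ T, s.Infinite ∧ G.IsTwinSet s := by
  have hcover : T ⊆ ⋃ S ∈ 𝒫 X, {v ∈ T | G.neighborSet v = S} :=
    fun v hv => Set.mem_biUnion (hN v hv) ⟨hv, rfl⟩
  obtain ⟨S, -, hS⟩ : ∃ S ∈ 𝒫 X, {v ∈ T | G.neighborSet v = S}.Infinite := by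
    by_contra! h
    exact hT ((hX.powerset.biUnion h).subset hcover)
  exact ⟨_, fun v hv => hv.1, hS, fun u hu v hv => hu.2.trans hv.2.symm⟩

end SimpleGraph

theorem stmt18_general {W : Type} [Nonempty W] (F : SimpleGraph W)
    (hni : NoIsolated F)
    (hfin : {v | (F.neighborSet v).Infinite}.Finite)
    (hcov : ∀ a b, F.Adj a b → (F.neighborSet a).Infinite ∨ (F.neighborSet b).Infinite) :
    SelfEmbeddable F := by
  set X := {v | (F.neighborSet v).Infinite}
  have hN : ∀ v ∈ Xᶜ, F.neighborSet v ⊆ X := fun v hv w hw => (hcov v w hw).resolve_left hv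
  obtain ⟨x, hx⟩ : X.Nonempty := by
    obtain ⟨v⟩ := ‹Nonempty W›
    obtain ⟨w, hvw⟩ := hni v
    exact (hcov v w hvw).elim (⟨v, ·⟩) (⟨w, ·⟩)
  have hXc : Xᶜ.Infinite := (hx.sdiff hfin).mono fun _ h => h.2
  obtain ⟨s, -, hs, htwin⟩ := F.exists_infinite_isTwinSet hfin hXc hN
  obtain ⟨v, hv⟩ := hs.nonempty
  obtain ⟨w, hvw⟩ := hni v
  exact htwin.selfEmbeddable hs hv hvw

/-- Every countable graph with finitely many vertices of infinite degree, all of whose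
edges are incident to such a vertex, is self-embeddable. -/
theorem stmt18 {W : Type} [Countable W] [Nonempty W] (F : SimpleGraph W)
    (hni : NoIsolated F)
    (hfin : {v | (F.neighborSet v).Infinite}.Finite)
    (hcov : ∀ a b, F.Adj a b → (F.neighborSet a).Infinite ∨ (F.neighborSet b).Infinite) :
    SelfEmbeddable F :=
  stmt18_general F hni hfin hcov
end
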